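/- arXiv:0906.1166 — 2 statements merged into one kernel-verified Lean document; each statement's English description precedes it below -/
import Mathlib

section
/- In a 1-nested hybridization network, every pair of nodes u, v has a unique lowest common ancestor (a common ancestor that is not a proper ancestor of any other common ancestor), and this node is a common ancestor of u and v that is a strict ancestor of at least one of them and a descendant of every node with those properties (i.e., it is their least common semistrict ancestor). -/
/-!
If `x` reaches `t` but some root-to-`t` walk `L` avoids `x`, follow a path from `x` until it
first meets `L`, at `c`. The walk root → `ρ` → `x` → ⋯ → `c` (for a fixed parent `ρ` of `x`) and
the prefix of `L` up to `c` enter `c` from different parents, so they close a reticulation cycle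
with hybrid `c` through the arc `ρ → x`. In a 1-nested network an arc lies on the cycle of at most
one hybrid, so `c` depends only on that arc.

Let `x` be an LCA of `u, v` and `y` a common ancestor incomparable to `x`. Root walks through `y`
avoid `x`, so any common descendant of `x` and `y` lies below one fixed hybrid: `x` and `y` have a
least common descendant, a common ancestor of `u, v` strictly below `x`, which is impossible.
Hence every common ancestor lies above `x`, which gives uniqueness and leastness. If `x` were a
strict ancestor of neither `u` nor `v`, root walks to `u` and to `v` avoiding `x` would produce the
same hybrid, again a common ancestor strictly below `x`.
-/

/-- A walk in a directed graph `E` given by its (nonempty) list of vertices,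
from `u` to `v`. -/
def IsWalk {V : Type*} (E : V → V → Prop) (l : List V) (u v : V) : Prop :=
  l.Chain' E ∧ l.head? = some u ∧ l.getLast? = some v

/-- In-degree of a node. -/
noncomputable def inDeg {V : Type*} [Fintype V] (E : V → V → Prop) (v : V) : ℕ :=
  Nat.card {u // E u v}

/-- Out-degree of a node. -/
noncomputable def outDeg {V : Type*} [Fintype V] (E : V → V → Prop) (v : V) : ℕ :=
  Nat.card {w // E v w}

/-- The cluster of a node: the set of leaves (out-degree 0 nodes) that are
descendants of it. -/
noncomputable def cluster {V : Type*} [Fintype V] (E : V → V → Prop) (v : V) : Set V :=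
  {l | outDeg E l = 0 ∧ Relation.ReflTransGen E v l}

/-- The intermediate (internal) nodes of a walk. -/
def internals {V : Type*} (l : List V) : List V := l.tail.dropLast

/-- The arcs of a walk. -/
def arcsOf {V : Type*} (l : List V) : List (V × V) := l.zip l.tail

/-- A reticulation cycle with split node `x` and hybrid end `h`, consisting of the
two internally disjoint merge paths `p` and `q`. -/
def RetCycleAt {V : Type*} (E : V → V → Prop) (x h : V) (p q : List V) : Prop :=
  IsWalk E p x h ∧ IsWalk E q x h ∧ p ≠ q ∧ ∀ y ∈ internals p, y ∉ internals q

/-- A network is 1-nested when every pair of distinct reticulation cycles (for hybrid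
nodes) have disjoint sets of arcs. -/
noncomputable def OneNested {V : Type*} [Fintype V] (E : V → V → Prop) : Prop :=
  ∀ x h p q x' h' p' q', 2 ≤ inDeg E h → 2 ≤ inDeg E h' →
    RetCycleAt E x h p q → RetCycleAt E x' h' p' q' →
    ¬ (x = x' ∧ h = h' ∧ ({p, q} : Set (List V)) = {p', q'}) →
    ∀ a ∈ arcsOf p ++ arcsOf q, a ∉ arcsOf p' ++ arcsOf q'

/-- `x` is a common ancestor of `u` and `v`. -/
def CommonAnc {V : Type*} (E : V → V → Prop) (x u v : V) : Prop :=
  Relation.ReflTransGen E x u ∧ Relation.ReflTransGen E x v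

/-- `x` is a lowest common ancestor of `u` and `v`: a common ancestor that is not a
proper ancestor of any other common ancestor. -/
def IsLCA {V : Type*} (E : V → V → Prop) (x u v : V) : Prop :=
  CommonAnc E x u v ∧ ∀ y, CommonAnc E y u v → y ≠ x → ¬ Relation.TransGen E x y

open Relation List

lemma List.exists_eq_append_cons_forall_not {α : Type*} (p : α → Prop) :
    ∀ {l : List α}, (∃ a ∈ l, p a) → ∃ I s J, l = I ++ s :: J ∧ p s ∧ ∀ y ∈ J, ¬ p y
  | [], ⟨_, ha, _⟩ => absurd ha not_mem_nil
  | a :: l, hex => by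
    by_cases hl : ∃ b ∈ l, p b
    · obtain ⟨I, s, J, rfl, hs, hJ⟩ := exists_eq_append_cons_forall_not p hl
      exact ⟨a :: I, s, J, rfl, hs, hJ⟩
    · obtain ⟨b, hb, hpb⟩ := hex
      obtain rfl : b = a := (mem_cons.mp hb).resolve_right fun hb => hl ⟨b, hb, hpb⟩
      exact ⟨[], b, l, rfl, hpb, fun y hy hpy => hl ⟨y, hy, hpy⟩⟩

section Walks

variable {V : Type*} {E : V → V → Prop}

lemma isWalk_singleton (u : V) : IsWalk E [u] u u :=
  ⟨isChain_singleton u, rfl, rfl⟩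

lemma isWalk_cons_cons_iff {a b u v : V} {l : List V} :
    IsWalk E (a :: b :: l) u v ↔ a = u ∧ E a b ∧ IsWalk E (b :: l) b v := by
  simp only [IsWalk, head?_cons, getLast?_cons_cons, Option.some.injEq, true_and]
  exact ⟨fun ⟨hc, hu, hv⟩ => ⟨hu, (isChain_cons_cons.mp hc).1, (isChain_cons_cons.mp hc).2, hv⟩,
    fun ⟨hu, hab, hc, hv⟩ => ⟨hc.cons_cons hab, hu, hv⟩⟩

lemma IsWalk.ne_nil {l : List V} {u v : V} (h : IsWalk E l u v) : l ≠ [] := by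
  rintro rfl; simp [IsWalk] at h

lemma IsWalk.cons {l : List V} {u v w : V} (huv : E u v) (h : IsWalk E l v w) :
    IsWalk E (u :: l) u w := by
  obtain ⟨hc, hh, hl⟩ := h
  obtain _ | ⟨b, l⟩ := l
  · simp at hh
  · obtain rfl : b = v := by simpa using hh
    exact isWalk_cons_cons_iff.mpr ⟨rfl, huv, hc, rfl, hl⟩

lemma IsWalk.concat {l : List V} {u v w : V} (h : IsWalk E l u v) (hvw : E v w) :
    IsWalk E (l ++ [w]) u w := by
  refine ⟨isChain_append.mpr ⟨h.1, isChain_singleton w, ?_⟩, ?_, by simp⟩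
  · simp [h.2.2, hvw]
  · rw [head?_append_of_ne_nil _ h.ne_nil]; exact h.2.1

lemma IsWalk.reflTransGen_of_mem {l : List V} {u v y : V} (h : IsWalk E l u v) (hy : y ∈ l) :
    ReflTransGen E u y ∧ ReflTransGen E y v := by
  induction l generalizing u y with
  | nil => simp at hy
  | cons a l ih =>
    obtain _ | ⟨b, l⟩ := l
    · obtain ⟨-, ⟨⟩, ⟨⟩⟩ := h
      obtain rfl := mem_singleton.mp hy
      exact ⟨.refl, .refl⟩
    · obtain ⟨rfl, hab, hbl⟩ := isWalk_cons_cons_iff.mp h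
      rcases mem_cons.mp hy with rfl | hy
      · exact ⟨.refl, .head hab (ih hbl mem_cons_self).2⟩
      · exact (ih hbl hy).imp_left (.head hab)

lemma IsWalk.reflTransGen {l : List V} {u v : V} (h : IsWalk E l u v) : ReflTransGen E u v :=
  (h.reflTransGen_of_mem (mem_of_getLast? h.2.2)).1

lemma exists_isWalk {u v : V} (h : ReflTransGen E u v) : ∃ l, IsWalk E l u v := by
  induction h with
  | refl => exact ⟨_, isWalk_singleton u⟩
  | tail _ hbc ih =>
    obtain ⟨l, hl⟩ := ih
    exact ⟨_, hl.concat hbc⟩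

lemma exists_isWalk_via {u a v : V} (hua : ReflTransGen E u a) (hav : ReflTransGen E a v) :
    ∃ l, IsWalk E l u v ∧ ∀ y ∈ l, ReflTransGen E y a ∨ ReflTransGen E a y := by
  induction hav with
  | refl =>
    obtain ⟨l, hl⟩ := exists_isWalk hua
    exact ⟨l, hl, fun y hy => .inl (hl.reflTransGen_of_mem hy).2⟩
  | tail hab hbc ih =>
    obtain ⟨l, hl, hmem⟩ := ih
    refine ⟨l ++ [_], hl.concat hbc, fun y hy => ?_⟩
    rcases mem_append.mp hy with hy | hy
    · exact hmem y hy
    · exact .inr ((mem_singleton.mp hy) ▸ hab.tail hbc)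

lemma IsWalk.append {l m : List V} {u v w z : V} (hl : IsWalk E l u v) (hvw : E v w)
    (hm : IsWalk E m w z) : IsWalk E (l ++ m) u z := by
  refine ⟨isChain_append.mpr ⟨hl.1, hm.1, ?_⟩, ?_, ?_⟩
  · simp [hl.2.2, hm.2.1, hvw]
  · rw [head?_append_of_ne_nil _ hl.ne_nil]; exact hl.2.1
  · rw [getLast?_append_of_ne_nil _ hm.ne_nil]; exact hm.2.2

lemma IsWalk.suffix {I J : List V} {u v s : V} (h : IsWalk E (I ++ s :: J) u v) :
    IsWalk E (s :: J) s v :=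
  ⟨(isChain_append.mp h.1).2.1, rfl, by simpa using h.2.2⟩

lemma IsWalk.prefix {I J : List V} {u v c : V} (h : IsWalk E (I ++ c :: J) u v) (hI : I ≠ []) :
    ∃ π, IsWalk E I u π ∧ E π c := by
  obtain ⟨I, π, rfl⟩ := (eq_nil_or_concat I).resolve_left hI
  have hc := h.1
  simp only [concat_eq_append, append_assoc, singleton_append] at hc ⊢ h
  obtain ⟨hI', hπc, -⟩ := isChain_append_cons_cons.mp hc
  refine ⟨π, ⟨hI', ?_, by simp⟩, hπc⟩
  simpa [head?_append] using h.2.1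

lemma IsWalk.transGen_of_mem_prefix {I J : List V} {u v s a : V}
    (h : IsWalk E (I ++ s :: J) u v) (ha : a ∈ I) : TransGen E a s := by
  obtain ⟨π, hI, hπs⟩ := h.prefix (ne_nil_of_mem ha)
  exact .tail' (hI.reflTransGen_of_mem ha).2 hπs

lemma exists_walk_to_first_mem {S : Set V} {x d : V} (hxd : ReflTransGen E x d) (hd : d ∈ S)
    (hx : x ∉ S) :
    ∃ P π c, IsWalk E P x π ∧ E π c ∧ c ∈ S ∧ ∀ y ∈ P, y ∉ S := by
  induction hxd using ReflTransGen.head_induction_on with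
  | refl => exact absurd hd hx
  | @head x y hxy hyd ih =>
    by_cases hy : y ∈ S
    · exact ⟨_, _, _, isWalk_singleton _, hxy, hy, by simpa using hx⟩
    · obtain ⟨P, π, c, hP, hπc, hc, hPS⟩ := ih hy
      refine ⟨_, π, c, hP.cons hxy, hπc, hc, ?_⟩
      rintro y (_ | ⟨_, hy⟩)
      exacts [hx, hPS y hy]

end Walks

section Arcs

variable {V : Type*}

lemma mem_arcsOf_cons {x : V} {l : List V} {e : V × V} :
    e ∈ arcsOf (x :: l) ↔ (∃ y ∈ l.head?, e = (x, y)) ∨ e ∈ arcsOf l := by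
  obtain _ | ⟨y, l⟩ := l <;> simp [arcsOf]

lemma mem_arcsOf_append_cons_cons (l m : List V) (a b : V) :
    (a, b) ∈ arcsOf (l ++ a :: b :: m) := by
  induction l with
  | nil => simp [mem_arcsOf_cons]
  | cons x l ih => exact mem_arcsOf_cons.mpr (.inr ih)

lemma mem_arcsOf_of_mem_arcsOf_append {I l : List V} {a b : V} (h : (a, b) ∈ arcsOf (I ++ l))
    (ha : a ∉ I) : (a, b) ∈ arcsOf l := by
  induction I with
  | nil => simpa using h
  | cons x I ih =>
    obtain ⟨hax, haI⟩ := not_or.mp (mem_cons.not.mp ha)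
    rw [cons_append, mem_arcsOf_cons] at h
    obtain ⟨y, -, he⟩ | h := h
    · exact absurd (Prod.ext_iff.mp he).1 hax
    · exact ih h haI

end Arcs

section RetCycles

variable {V : Type*} {E : V → V → Prop}

lemma exists_retCycleAt {U₁ U₂ : List V} {r p₁ p₂ c : V} (h₁ : IsWalk E U₁ r p₁)
    (h₂ : IsWalk E U₂ r p₂) (e₁ : E p₁ c) (e₂ : E p₂ c) (hp : p₁ ≠ p₂) :
    ∃ I s J q, U₁ = I ++ s :: J ∧ s ∈ U₂ ∧ RetCycleAt E s c (s :: J ++ [c]) q := by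
  obtain ⟨I, s, J, rfl, hs, hJ⟩ := exists_eq_append_cons_forall_not (· ∈ U₂)
    ⟨r, mem_of_mem_head? h₁.2.1, mem_of_mem_head? h₂.2.1⟩
  obtain ⟨I₂, J₂, rfl⟩ := append_of_mem hs
  have w₁ := h₁.suffix
  have w₂ := h₂.suffix
  refine ⟨I, s, J, s :: J₂ ++ [c], rfl, hs, w₁.concat e₁, w₂.concat e₂, ?_, ?_⟩
  · intro heq
    obtain rfl : J = J₂ := by simpa using heq
    exact hp (Option.some.inj (w₁.2.2.symm.trans w₂.2.2))
  · intro y hy hy₂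
    simp only [internals, cons_append, tail_cons, dropLast_concat] at hy hy₂
    exact hJ y hy (mem_append_right _ (mem_cons_of_mem _ hy₂))

lemma two_le_inDeg [Fintype V] {a b c : V} (ha : E a c) (hb : E b c) (hab : a ≠ b) :
    2 ≤ inDeg E c :=
  Finite.one_lt_card_iff_nontrivial.mpr ⟨⟨a, ha⟩, ⟨b, hb⟩, by simpa using hab⟩

def OnRetCycle [Fintype V] (E : V → V → Prop) (e : V × V) (c : V) : Prop :=
  2 ≤ inDeg E c ∧ ∃ s p q, RetCycleAt E s c p q ∧ e ∈ arcsOf p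

lemma OneNested.eq_of_onRetCycle [Fintype V] (hE : OneNested E) {e : V × V} {c c' : V}
    (h : OnRetCycle E e c) (h' : OnRetCycle E e c') : c = c' := by
  obtain ⟨hc, s, p, q, hret, he⟩ := h
  obtain ⟨hc', s', p', q', hret', he'⟩ := h'
  by_contra hne
  exact hE s c p q s' c' p' q' hc hc' hret hret' (fun h => hne h.2.1) e
    (mem_append_left _ he) (mem_append_left _ he')

lemma onRetCycle_of_isWalk [Fintype V] (hacyc : ∀ v, ¬ TransGen E v v) {R P U : List V}
    {r ρ x π₁ π₂ c : V} (hR : IsWalk E R r ρ) (hρx : E ρ x) (hP : IsWalk E P x π₁)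
    (hπ₁ : E π₁ c) (hU : IsWalk E U r π₂) (hπ₂ : E π₂ c) (hPU : ∀ y ∈ P, y ∉ U) :
    OnRetCycle E (ρ, x) c := by
  have hπ : π₁ ≠ π₂ := fun h => hPU π₁ (mem_of_getLast? hP.2.2) (h ▸ mem_of_getLast? hU.2.2)
  obtain ⟨I, s, J, q, hRP, hsU, hret⟩ := exists_retCycleAt (hR.append hρx hP) hU hπ₁ hπ₂ hπ
  have hsR : s ∈ R := by
    have hs : s ∈ R ++ P := hRP ▸ mem_append_right _ mem_cons_self
    exact (mem_append.mp hs).resolve_right fun hsP => hPU s hsP hsU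
  have hρI : ρ ∉ I := fun hρ =>
    hacyc ρ ((hRP ▸ hR.append hρx hP).transGen_of_mem_prefix hρ |>.trans_left
      (hR.reflTransGen_of_mem hsR).2)
  refine ⟨two_le_inDeg hπ₁ hπ₂ hπ, s, _, q, hret, mem_arcsOf_of_mem_arcsOf_append ?_ hρI⟩
  obtain ⟨R', rfl⟩ := getLast?_eq_some_iff.mp hR.2.2
  obtain ⟨P', rfl⟩ := head?_eq_some_iff.mp hP.2.1
  have : I ++ (s :: J ++ [c]) = R' ++ ρ :: x :: (P' ++ [c]) := by
    simpa using (congrArg (· ++ [c]) hRP).symm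
  exact this ▸ mem_arcsOf_append_cons_cons _ _ _ _

lemma exists_onRetCycle_of_not_mem [Fintype V] (hacyc : ∀ v, ¬ TransGen E v v) {L : List V}
    {r t x ρ : V} (hL : IsWalk E L r t) (hxL : x ∉ L) (hxt : ReflTransGen E x t)
    (hρ : ReflTransGen E r ρ) (hρx : E ρ x) :
    ∃ c ∈ L, OnRetCycle E (ρ, x) c ∧ ReflTransGen E x c := by
  obtain ⟨R, hR⟩ := exists_isWalk hρ
  obtain ⟨P, π₁, c, hP, hπ₁, hcL, hPL⟩ :=
    exists_walk_to_first_mem (S := {y | y ∈ L}) hxt (mem_of_getLast? hL.2.2) hxL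
  have hxc : ReflTransGen E x c := hP.reflTransGen.tail hπ₁
  obtain ⟨I, J, rfl⟩ := append_of_mem hcL
  have hI : I ≠ [] := by
    rintro rfl
    obtain rfl : c = r := by simpa using hL.2.1
    exact hacyc c (TransGen.tail' hρ hρx |>.trans_left hxc)
  obtain ⟨π₂, hU, hπ₂⟩ := hL.prefix hI
  exact ⟨c, hcL, onRetCycle_of_isWalk hacyc hR hρx hP hπ₁ hU hπ₂
    fun y hy hyI => hPL y hy (mem_append_left _ hyI), hxc⟩

end RetCycles

section LCA

variable {V : Type*} {E : V → V → Prop}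

def IsStrictAnc (E : V → V → Prop) (r x u : V) : Prop :=
  ∀ l, IsWalk E l r u → x ∈ l

lemma eq_of_reflTransGen_of_reflTransGen (hacyc : ∀ v, ¬ TransGen E v v) {a b : V}
    (hab : ReflTransGen E a b) (hba : ReflTransGen E b a) : a = b := by
  by_contra hne
  have hab' := (reflTransGen_iff_eq_or_transGen.mp hab).resolve_left (Ne.symm hne)
  exact hacyc a (hab'.trans_left hba)

lemma exists_least_common_descendant [Fintype V] (hacyc : ∀ v, ¬ TransGen E v v) {r : V}
    (hroot : ∀ v, ReflTransGen E r v) (hE : OneNested E) {a b d₀ : V}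
    (hab : ¬ ReflTransGen E a b) (hba : ¬ ReflTransGen E b a)
    (had₀ : ReflTransGen E a d₀) (hbd₀ : ReflTransGen E b d₀) :
    ∃ w, ReflTransGen E a w ∧ ReflTransGen E b w ∧
      ∀ d, ReflTransGen E a d → ReflTransGen E b d → ReflTransGen E w d := by
  obtain ⟨ρ, hρ, hρa⟩ : ∃ ρ, ReflTransGen E r ρ ∧ E ρ a :=
    (hroot a).cases_tail.resolve_left fun h => hab (h ▸ hroot b)
  have hcycle : ∀ d, ReflTransGen E a d → ReflTransGen E b d → ∃ c, OnRetCycle E (ρ, a) c ∧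
      ReflTransGen E a c ∧ ReflTransGen E b c ∧ ReflTransGen E c d := by
    intro d had hbd
    obtain ⟨L, hL, hLb⟩ := exists_isWalk_via (hroot b) hbd
    obtain ⟨c, hcL, hc, hac⟩ :=
      exists_onRetCycle_of_not_mem hacyc hL (fun h => (hLb a h).elim hab hba) had hρ hρa
    exact ⟨c, hc, hac, (hLb c hcL).resolve_left fun hcb => hab (hac.trans hcb),
      (hL.reflTransGen_of_mem hcL).2⟩
  obtain ⟨w, hw, haw, hbw, -⟩ := hcycle d₀ had₀ hbd₀
  refine ⟨w, haw, hbw, fun d had hbd => ?_⟩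
  obtain ⟨c, hc, -, -, hcd⟩ := hcycle d had hbd
  rwa [hE.eq_of_onRetCycle hw hc]

lemma IsLCA.eq_of_reflTransGen {x y u v : V} (hx : IsLCA E x u v) (hy : CommonAnc E y u v)
    (hxy : ReflTransGen E x y) : y = x := by
  by_contra hne
  exact hx.2 y hy hne ((reflTransGen_iff_eq_or_transGen.mp hxy).resolve_left hne)

lemma IsLCA.reflTransGen_of_commonAnc [Fintype V] (hacyc : ∀ v, ¬ TransGen E v v) {r : V}
    (hroot : ∀ v, ReflTransGen E r v) (hE : OneNested E) {x y u v : V} (hx : IsLCA E x u v)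
    (hy : CommonAnc E y u v) : ReflTransGen E y x := by
  by_contra hyx
  have hxy : ¬ ReflTransGen E x y := fun hxy => hyx (hx.eq_of_reflTransGen hy hxy ▸ .refl)
  obtain ⟨w, hxw, hyw, hleast⟩ :=
    exists_least_common_descendant hacyc hroot hE hxy hyx hx.1.1 hy.1
  have hw : CommonAnc E w u v := ⟨hleast u hx.1.1 hy.1, hleast v hx.1.2 hy.2⟩
  exact hyx (hx.eq_of_reflTransGen hw hxw ▸ hyw)

lemma exists_isLCA [Finite V] (hacyc : ∀ v, ¬ TransGen E v v) {u v : V}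
    (h : ∃ y, CommonAnc E y u v) : ∃ x, IsLCA E x u v := by
  have : IsTrans V (flip (TransGen E)) := ⟨fun _ _ _ h₁ h₂ => h₂.trans h₁⟩
  have : Std.Irrefl (flip (TransGen E)) := ⟨hacyc⟩
  obtain ⟨x, hx, hmin⟩ := (Finite.wellFounded_of_trans_of_irrefl (flip (TransGen E))).has_min _ h
  exact ⟨x, hx, fun y hy _ => hmin y hy⟩

lemma IsLCA.isStrictAnc_or [Fintype V] (hacyc : ∀ v, ¬ TransGen E v v) {r : V}
    (hroot : ∀ v, ReflTransGen E r v) (hE : OneNested E) {x u v : V} (hx : IsLCA E x u v) :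
    IsStrictAnc E r x u ∨ IsStrictAnc E r x v := by
  by_contra! h
  simp only [IsStrictAnc, not_forall, exists_prop] at h
  obtain ⟨⟨Lu, hLu, hxu⟩, ⟨Lv, hLv, hxv⟩⟩ := h
  obtain ⟨ρ, hρ, hρx⟩ : ∃ ρ, ReflTransGen E r ρ ∧ E ρ x :=
    (hroot x).cases_tail.resolve_left fun h => hxu (h ▸ mem_of_mem_head? hLu.2.1)
  obtain ⟨c, hcu, hc, hxc⟩ := exists_onRetCycle_of_not_mem hacyc hLu hxu hx.1.1 hρ hρx
  obtain ⟨c', hc'v, hc', -⟩ := exists_onRetCycle_of_not_mem hacyc hLv hxv hx.1.2 hρ hρx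
  obtain rfl := hE.eq_of_onRetCycle hc hc'
  have hcx := hx.eq_of_reflTransGen
    ⟨(hLu.reflTransGen_of_mem hcu).2, (hLv.reflTransGen_of_mem hc'v).2⟩ hxc
  exact hxu (hcx ▸ hcu)

end LCA

theorem stmt14_general {V : Type*} [Fintype V] (E : V → V → Prop) (r : V)
    (hacyc : ∀ v, ¬ Relation.TransGen E v v)
    (hroot : ∀ v, Relation.ReflTransGen E r v)
    (hnested : OneNested E)
    (u v : V) :
    (∃! x, IsLCA E x u v) ∧
    ∀ x, IsLCA E x u v →
      ((∀ l : List V, IsWalk E l r u → x ∈ l) ∨ (∀ l : List V, IsWalk E l r v → x ∈ l)) ∧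
      ∀ y, CommonAnc E y u v →
        ((∀ l : List V, IsWalk E l r u → y ∈ l) ∨ (∀ l : List V, IsWalk E l r v → y ∈ l)) →
        Relation.ReflTransGen E y x := by
  have hanc : ∀ {x y}, IsLCA E x u v → CommonAnc E y u v → ReflTransGen E y x :=
    fun hx hy => hx.reflTransGen_of_commonAnc hacyc hroot hnested hy
  obtain ⟨x, hx⟩ := exists_isLCA hacyc ⟨r, hroot u, hroot v⟩
  refine ⟨⟨x, hx, fun y hy => ?_⟩, fun y hy => ⟨hy.isStrictAnc_or hacyc hroot hnested, ?_⟩⟩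
  · exact eq_of_reflTransGen_of_reflTransGen hacyc (hanc hx hy.1) (hanc hy hx.1)
  · exact fun z hz _ => hanc hy hz

/-- In a 1-nested hybridization network, every pair of nodes has a unique lowest
common ancestor, and it is their least common semistrict ancestor: a common ancestor
of both that is a strict ancestor of at least one of them, and a descendant of every
node with these properties. -/
theorem stmt14 {V : Type*} [Fintype V] (E : V → V → Prop) (r : V)
    (hacyc : ∀ v, ¬ Relation.TransGen E v v)
    (hroot : ∀ v, Relation.ReflTransGen E r v)
    (hin2 : ∀ v, inDeg E v ≤ 2)
    (hnod1 : ∀ v, inDeg E v ≤ 1 → outDeg E v ≠ 1)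
    (hnested : OneNested E)
    (u v : V) :
    (∃! x, IsLCA E x u v) ∧
    ∀ x, IsLCA E x u v →
      ((∀ l : List V, IsWalk E l r u → x ∈ l) ∨ (∀ l : List V, IsWalk E l r v → x ∈ l)) ∧
      ∀ y, CommonAnc E y u v →
        ((∀ l : List V, IsWalk E l r u → y ∈ l) ∨ (∀ l : List V, IsWalk E l r v → y ∈ l)) →
        Relation.ReflTransGen E y x :=
  stmt14_general E r hacyc hroot hnested u v
end

section
/- Every 1-nested hybridization network with more than one node contains either an internal tree node all of whose children are tree leaves, or a hybrid node h all of whose children are tree leaves such that every intermediate node of the reticulation cycle for h has all its children outside the cycle being tree leaves. -/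
/-!
If some non-leaf node has only tree nodes below it, a lowest non-leaf node below it is a tree node
whose children are tree leaves. Otherwise every non-leaf node has a hybrid below it; take a
reticulation cycle whose split node `x` has no split node of another cycle strictly below it. By
1-nestedness every arc entering a node of the cycle other than `x` is an arc of the cycle, so what
hangs off the cycle never re-enters it. If a hybrid lay below a child `w` hanging off the cycle, a
topmost one `t` would have its cycle split outside the descendants of `w` (by the choice of `x`),
and the arc by which that cycle enters the descendants of `w` would end at a hybrid above `t`. So
only tree nodes lie below `w`, and `w` is a tree leaf.
-/

open Relation

section Walks

variable {V : Type*} {E : V → V → Prop}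

theorem mem_arcsOf_iff {a b : V} {l : List V} :
    (a, b) ∈ arcsOf l ↔ ∃ l₁ l₂, l = l₁ ++ a :: b :: l₂ := by
  induction l with
  | nil => simp [arcsOf]
  | cons c l ih =>
    cases l with
    | nil =>
      simp only [arcsOf, List.tail_cons, List.zip_nil_right, List.not_mem_nil, false_iff]
      rintro ⟨_ | ⟨_, _ | _⟩, l₂, h⟩ <;> simp at h
    | cons d l =>
      simp only [arcsOf, List.tail_cons, List.zip_cons_cons, List.mem_cons, Prod.mk.injEq] at ih ⊢
      rw [ih]
      constructor
      · rintro (⟨rfl, rfl⟩ | ⟨l₁, l₂, h⟩)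
        · exact ⟨[], l, rfl⟩
        · exact ⟨c :: l₁, l₂, by rw [h]; rfl⟩
      · rintro ⟨_ | ⟨c', l₁⟩, l₂, h⟩
        · simp_all
        · simp only [List.cons_append, List.cons.injEq] at h
          exact Or.inr ⟨l₁, l₂, h.2⟩

theorem internals_concat {l : List V} (hl : l ≠ []) (t : V) : internals (l ++ [t]) = l.tail := by
  obtain ⟨a, l, rfl⟩ := List.exists_cons_of_ne_nil hl
  simp [internals]

theorem mem_of_mem_internals {y : V} {l : List V} (hy : y ∈ internals l) : y ∈ l :=
  List.mem_of_mem_tail (List.dropLast_subset _ hy)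

theorem exists_mem_arcsOf_not_mem_mem {S : Set V} {u b : V} {l : List V} (hu : u ∉ S)
    (hb : b ∈ l) (hbS : b ∈ S) : ∃ a c, (a, c) ∈ arcsOf (u :: l) ∧ a ∉ S ∧ c ∈ S := by
  induction l generalizing u with
  | nil => simp at hb
  | cons c l ih =>
    by_cases hc : c ∈ S
    · exact ⟨u, c, mem_arcsOf_iff.mpr ⟨[], l, rfl⟩, hu, hc⟩
    · have hbl : b ∈ l := by
        rcases List.mem_cons.mp hb with rfl | hbl
        · exact absurd hbS hc
        · exact hbl
      obtain ⟨a, d, had, haS, hdS⟩ := ih hc hbl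
      obtain ⟨l₁, l₂, hl⟩ := mem_arcsOf_iff.mp had
      exact ⟨a, d, mem_arcsOf_iff.mpr ⟨u :: l₁, l₂, by rw [hl]; rfl⟩, haS, hdS⟩

namespace IsWalk

theorem eq_cons {l : List V} {u v : V} (h : IsWalk E l u v) : ∃ t, l = u :: t := by
  obtain ⟨-, hu, -⟩ := h
  cases l with
  | nil => simp at hu
  | cons a t => exact ⟨t, by simpa using hu⟩

theorem ne_nil_s15 {l : List V} {u v : V} (h : IsWalk E l u v) : l ≠ [] := by
  obtain ⟨t, rfl⟩ := h.eq_cons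
  simp

theorem getLast_eq {l : List V} {u v : V} (h : IsWalk E l u v) : l.getLast h.ne_nil_s15 = v := by
  simpa [List.getLast?_eq_some_getLast h.ne_nil_s15] using h.2.2

theorem rel_of_mem_arcsOf {l : List V} {u v a b : V} (h : IsWalk E l u v)
    (hab : (a, b) ∈ arcsOf l) : E a b := by
  obtain ⟨l₁, l₂, rfl⟩ := mem_arcsOf_iff.mp hab
  exact List.isChain_iff_forall_rel_of_append_cons_cons.mp h.1 rfl

theorem reflTransGen_of_mem_s15 {l : List V} {u v a : V} (h : IsWalk E l u v) (ha : a ∈ l) :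
    ReflTransGen E u a := by
  obtain ⟨t, rfl⟩ := h.eq_cons
  exact List.IsChain.induction (ReflTransGen E u) _ h.1 (fun _ _ hxy hx => hx.tail hxy)
    (fun _ => ReflTransGen.refl) a ha

theorem suffix_s15 {l₁ l₂ : List V} {u v a : V} (h : IsWalk E (l₁ ++ a :: l₂) u v) :
    IsWalk E (a :: l₂) a v :=
  ⟨h.1.right_of_append, rfl, by simpa [List.getLast?_append] using h.2.2⟩

theorem transGen_of_mem_tail {l : List V} {u v a : V} (h : IsWalk E l u v) (ha : a ∈ l.tail) :
    TransGen E u a := by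
  obtain ⟨t, rfl⟩ := h.eq_cons
  cases t with
  | nil => simp at ha
  | cons b t =>
    exact TransGen.head' (List.isChain_cons_cons.mp h.1).1
      ((h.suffix_s15 (l₁ := [u])).reflTransGen_of_mem_s15 ha)

theorem transGen_of_mem_internals {l : List V} {u v y : V} (h : IsWalk E l u v)
    (hy : y ∈ internals l) : TransGen E u y :=
  h.transGen_of_mem_tail (List.dropLast_subset _ hy)

theorem reflTransGen_to_last {l : List V} {u v a : V} (h : IsWalk E l u v) (ha : a ∈ l) :
    ReflTransGen E a v := by
  obtain ⟨t, rfl⟩ := h.eq_cons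
  exact List.IsChain.backwards_cons_induction (ReflTransGen E · v) t h.1 h.getLast_eq
    (fun _ _ hxy hy => hy.head hxy) ReflTransGen.refl a ha

theorem mem_last {l : List V} {u v : V} (h : IsWalk E l u v) : v ∈ l :=
  List.mem_of_getLast? h.2.2

theorem of_reflTransGen {u v : V} (h : ReflTransGen E u v) : ∃ l, IsWalk E l u v := by
  obtain ⟨l, hl, hv⟩ := List.exists_isChain_cons_of_relationReflTransGen h
  exact ⟨u :: l, hl, rfl, by rw [List.getLast?_eq_some_getLast (List.cons_ne_nil _ _), hv]⟩

theorem concat_s15 {l : List V} {u c t : V} (h : IsWalk E l u c) (hct : E c t) :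
    IsWalk E (l ++ [t]) u t := by
  obtain ⟨s, rfl⟩ := h.eq_cons
  refine ⟨List.isChain_append.mpr ⟨h.1, List.isChain_singleton t, ?_⟩, rfl,
    List.getLast?_concat⟩
  intro a ha b hb
  rw [h.2.2] at ha
  simp_all

theorem mem_arcsOf_concat_last {l : List V} {u c t : V} (h : IsWalk E l u c) :
    (c, t) ∈ arcsOf (l ++ [t]) :=
  mem_arcsOf_iff.mpr ⟨l.dropLast, [], by
    conv_lhs => rw [← List.dropLast_append_getLast h.ne_nil_s15, h.getLast_eq]
    simp⟩

theorem eq_singleton (hacyc : ∀ v, ¬ TransGen E v v) {l : List V} {u : V}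
    (h : IsWalk E l u u) : l = [u] := by
  obtain ⟨_ | ⟨b, t⟩, rfl⟩ := h.eq_cons
  · rfl
  · refine absurd (h.transGen_of_mem_tail ?_) (hacyc u)
    have hlast := h.getLast_eq
    rw [List.getLast_cons_cons] at hlast
    exact hlast ▸ List.getLast_mem _

theorem exists_mem_arcsOf_not_mem_mem {S : Set V} {l : List V} {u v b : V}
    (h : IsWalk E l u v) (hu : u ∉ S) (hb : b ∈ l) (hbS : b ∈ S) :
    ∃ a c, (a, c) ∈ arcsOf l ∧ a ∉ S ∧ c ∈ S := by
  obtain ⟨t, rfl⟩ := h.eq_cons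
  exact _root_.exists_mem_arcsOf_not_mem_mem hu
    ((List.mem_cons.mp hb).resolve_left (by rintro rfl; exact hu hbS)) hbS

theorem exists_mem_arcsOf {l : List V} {u v a : V} (h : IsWalk E l u v) (ha : a ∈ l)
    (hau : a ≠ u) : ∃ e, (e, a) ∈ arcsOf l := by
  obtain ⟨e, c, hec, -, rfl⟩ := h.exists_mem_arcsOf_not_mem_mem (S := {a}) hau.symm ha rfl
  exact ⟨e, hec⟩

end IsWalk

theorem RetCycleAt.walk_left {x h : V} {p q : List V} (hC : RetCycleAt E x h p q) :
    IsWalk E p x h :=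
  hC.1

theorem RetCycleAt.walk_right {x h : V} {p q : List V} (hC : RetCycleAt E x h p q) :
    IsWalk E q x h :=
  hC.2.1

end Walks

section Networks

variable {V : Type*} {E : V → V → Prop}

theorem wellFounded_transGen [Finite V] (hacyc : ∀ v, ¬ TransGen E v v) :
    WellFounded (TransGen E) :=
  have : Std.Irrefl (TransGen E) := ⟨hacyc⟩
  Finite.wellFounded_of_trans_of_irrefl _

theorem wellFounded_swap_transGen [Finite V] (hacyc : ∀ v, ¬ TransGen E v v) :
    WellFounded (Function.swap (TransGen E)) :=
  have : Std.Irrefl (Function.swap (TransGen E)) := ⟨hacyc⟩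
  Finite.wellFounded_of_trans_of_irrefl _

theorem two_le_inDeg_iff [Fintype V] {v : V} :
    2 ≤ inDeg E v ↔ ∃ a b, a ≠ b ∧ E a v ∧ E b v := by
  classical
  change 1 < Nat.card _ ↔ _
  rw [Nat.card_eq_fintype_card, Fintype.one_lt_card_iff]
  constructor
  · rintro ⟨⟨a, ha⟩, ⟨b, hb⟩, hab⟩
    exact ⟨a, b, fun h => hab (Subtype.ext h), ha, hb⟩
  · rintro ⟨a, b, hab, ha, hb⟩
    exact ⟨⟨a, ha⟩, ⟨b, hb⟩, fun h => hab (congrArg Subtype.val h)⟩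

theorem exists_ne_rel_of_two_le_inDeg [Fintype V] {v c : V} (hv : 2 ≤ inDeg E v) :
    ∃ d, d ≠ c ∧ E d v := by
  obtain ⟨a, b, hab, ha, hb⟩ := two_le_inDeg_iff.mp hv
  by_cases hac : a = c
  · exact ⟨b, hac ▸ hab.symm, hb⟩
  · exact ⟨a, hac, ha⟩

theorem outDeg_eq_zero_iff [Fintype V] {v : V} : outDeg E v = 0 ↔ ∀ w, ¬ E v w := by
  rw [outDeg, Finite.card_eq_zero_iff, isEmpty_subtype]

theorem IsWalk.exists_tail_disjoint {A B : List V} {s a b : V} (hA : IsWalk E A s a)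
    (hB : IsWalk E B s b) :
    ∃ x A' B', IsWalk E A' x a ∧ IsWalk E B' x b ∧ ∀ y ∈ A'.tail, y ∉ B'.tail := by
  induction hn : A.length + B.length using Nat.strong_induction_on generalizing s A B with
  | _ n ih =>
  by_cases hdisj : ∀ y ∈ A.tail, y ∉ B.tail
  · exact ⟨s, A, B, hA, hB, hdisj⟩
  push Not at hdisj
  obtain ⟨y, hyA, hyB⟩ := hdisj
  obtain ⟨A₀, rfl⟩ := hA.eq_cons
  obtain ⟨B₀, rfl⟩ := hB.eq_cons
  obtain ⟨A₁, A₂, rfl⟩ := List.append_of_mem hyA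
  obtain ⟨B₁, B₂, rfl⟩ := List.append_of_mem hyB
  refine ih _ ?_ (hA.suffix_s15 (l₁ := s :: A₁)) (hB.suffix_s15 (l₁ := s :: B₁)) rfl
  simp only [List.length_cons, List.length_append] at hn ⊢
  omega

theorem exists_retCycleAt_s15 {s c₁ c₂ t : V} (hne : c₁ ≠ c₂) (h₁ : E c₁ t) (h₂ : E c₂ t)
    (hs₁ : ReflTransGen E s c₁) (hs₂ : ReflTransGen E s c₂) :
    ∃ x A B, IsWalk E A x c₁ ∧ IsWalk E B x c₂ ∧ RetCycleAt E x t (A ++ [t]) (B ++ [t]) := by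
  obtain ⟨A₀, hA₀⟩ := IsWalk.of_reflTransGen hs₁
  obtain ⟨B₀, hB₀⟩ := IsWalk.of_reflTransGen hs₂
  obtain ⟨x, A, B, hA, hB, hdisj⟩ := hA₀.exists_tail_disjoint hB₀
  refine ⟨x, A, B, hA, hB, hA.concat_s15 h₁, hB.concat_s15 h₂, fun hAB => hne ?_, ?_⟩
  · obtain rfl := List.append_cancel_right hAB
    exact Option.some.inj (hA.2.2.symm.trans hB.2.2)
  · rwa [internals_concat hA.ne_nil_s15, internals_concat hB.ne_nil_s15]

theorem RetCycleAt.ne (hacyc : ∀ v, ¬ TransGen E v v) {x h : V} {p q : List V}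
    (hC : RetCycleAt E x h p q) : x ≠ h := by
  rintro rfl
  exact hC.2.2.1
    ((hC.walk_left.eq_singleton hacyc).trans (hC.walk_right.eq_singleton hacyc).symm)

theorem RetCycleAt.transGen_of_mem {x h v : V} {p q : List V} (hC : RetCycleAt E x h p q)
    (hv : v ∈ p ∨ v ∈ q) (hvx : v ≠ x) : TransGen E x v :=
  (reflTransGen_iff_eq_or_transGen.mp (hv.elim hC.walk_left.reflTransGen_of_mem_s15
    hC.walk_right.reflTransGen_of_mem_s15)).resolve_left hvx

/-- Were `(e, v)` not a cycle arc, `v` would be a hybrid whose cycle through `e` shares with this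
one the cycle arc entering `v`. -/
theorem RetCycleAt.mem_arcsOf_of_rel [Fintype V] {r x h v e : V} {p q : List V}
    (hroot : ∀ v, ReflTransGen E r v) (hnested : OneNested E) (hh : 2 ≤ inDeg E h)
    (hC : RetCycleAt E x h p q) (hv : v ∈ p ∨ v ∈ q) (hvx : v ≠ x) (hev : E e v) :
    (e, v) ∈ arcsOf p ∨ (e, v) ∈ arcsOf q := by
  by_contra hno
  obtain ⟨d, hdv⟩ : ∃ d, (d, v) ∈ arcsOf p ∨ (d, v) ∈ arcsOf q := by
    rcases hv with hv | hv
    · exact (hC.walk_left.exists_mem_arcsOf hv hvx).imp fun _ => Or.inl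
    · exact (hC.walk_right.exists_mem_arcsOf hv hvx).imp fun _ => Or.inr
  have hd : E d v := hdv.elim hC.walk_left.rel_of_mem_arcsOf hC.walk_right.rel_of_mem_arcsOf
  have hde : d ≠ e := by
    rintro rfl
    exact hno hdv
  obtain ⟨y, A, B, hA, hB, hCv⟩ := exists_retCycleAt_s15 hde hd hev (hroot d) (hroot e)
  by_cases hsame : x = y ∧ h = v ∧ ({p, q} : Set (List V)) = {A ++ [v], B ++ [v]}
  · have hB' : B ++ [v] ∈ ({p, q} : Set (List V)) := hsame.2.2 ▸ Or.inr rfl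
    rcases hB' with hBp | hBq
    · exact hno (Or.inl (hBp ▸ hB.mem_arcsOf_concat_last))
    · exact hno (Or.inr (hBq ▸ hB.mem_arcsOf_concat_last))
  · exact hnested x h p q y v _ _ hh (two_le_inDeg_iff.mpr ⟨d, e, hde, hd, hev⟩) hC hCv hsame
      (d, v) (List.mem_append.mpr hdv) (List.mem_append_left _ hA.mem_arcsOf_concat_last)

theorem RetCycleAt.not_mem_of_reflTransGen [Fintype V] {r x h w u : V} {p q : List V}
    (hacyc : ∀ v, ¬ TransGen E v v) (hroot : ∀ v, ReflTransGen E r v) (hnested : OneNested E)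
    (hh : 2 ≤ inDeg E h) (hC : RetCycleAt E x h p q) (hxw : TransGen E x w) (hwp : w ∉ p)
    (hwq : w ∉ q) (hwu : ReflTransGen E w u) : u ∉ p ∧ u ∉ q := by
  induction hwu with
  | refl => exact ⟨hwp, hwq⟩
  | @tail b c hwb hbc ih =>
    have hcx : c ≠ x := by
      rintro rfl
      exact hacyc _ (hxw.trans_left (hwb.tail hbc))
    rw [← not_or]
    intro hc
    rcases hC.mem_arcsOf_of_rel hroot hnested hh hc hcx hbc with hbc' | hbc'
    · exact ih.1 (List.of_mem_zip hbc').1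
    · exact ih.2 (List.of_mem_zip hbc').1

theorem RetCycleAt.not_mem_of_disjoint [Fintype V] {r x h y x' t : V} {p q P : List V}
    (hroot : ∀ v, ReflTransGen E r v) (hnested : OneNested E) (hh : 2 ≤ inDeg E h)
    (hC : RetCycleAt E x h p q) (hy : y ∈ p ∨ y ∈ q) (hyx : y ≠ x) (hP : IsWalk E P x' t)
    (hyx' : y ≠ x') (hdisj : ∀ a ∈ arcsOf p ++ arcsOf q, a ∉ arcsOf P) : y ∉ P := fun hyP =>
  let ⟨_, he⟩ := hP.exists_mem_arcsOf hyP hyx'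
  hdisj _ (List.mem_append.mpr
    (hC.mem_arcsOf_of_rel hroot hnested hh hy hyx (hP.rel_of_mem_arcsOf he))) he

theorem RetCycleAt.exists_hybrid_transGen [Fintype V] {r x h y₀ w t : V} {p q : List V}
    (hacyc : ∀ v, ¬ TransGen E v v) (hroot : ∀ v, ReflTransGen E r v) (hnested : OneNested E)
    (hh : 2 ≤ inDeg E h) (hC : RetCycleAt E x h p q)
    (hmin : ∀ x' h' p' q', 2 ≤ inDeg E h' → RetCycleAt E x' h' p' q' → ¬ TransGen E x x')
    (hy₀ : y₀ ∈ p ∨ y₀ ∈ q) (hy₀x : y₀ ≠ x) (hy₀w : E y₀ w) (hwp : w ∉ p) (hwq : w ∉ q)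
    (hwt : ReflTransGen E w t) (ht : 2 ≤ inDeg E t) :
    ∃ z, ReflTransGen E w z ∧ 2 ≤ inDeg E z ∧ TransGen E z t := by
  set T : Set V := {c | c = y₀ ∨ ReflTransGen E w c}
  have hxy₀ : TransGen E x y₀ := hC.transGen_of_mem hy₀ hy₀x
  have hxT : ∀ c ∈ T, TransGen E x c := by
    rintro c (rfl | hwc)
    exacts [hxy₀, (hxy₀.tail hy₀w).trans_left hwc]
  have hparent : ∀ z, ReflTransGen E w z → ∃ c ∈ T, E c z := by
    intro z hwz
    rcases (ReflTransGen.cases_tail_iff E w z).mp hwz with rfl | ⟨c, hwc, hcz⟩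
    exacts [⟨y₀, Or.inl rfl, hy₀w⟩, ⟨c, Or.inr hwc, hcz⟩]
  obtain ⟨c₁, hc₁T, hc₁t⟩ := hparent t hwt
  obtain ⟨c₂, hc₂, hc₂t⟩ := exists_ne_rel_of_two_le_inDeg ht (c := c₁)
  obtain ⟨x', A, B, hA, -, hC'⟩ := exists_retCycleAt_s15 hc₂.symm hc₁t hc₂t (hroot c₁) (hroot c₂)
  have htC := hC.not_mem_of_reflTransGen hacyc hroot hnested hh (hxy₀.tail hy₀w) hwp hwq hwt
  have hdisj := hnested x h p q x' t _ _ hh ht hC hC' fun hs =>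
    htC.1 (hs.2.1 ▸ hC.walk_left.mem_last)
  have hx'T : x' ∉ T := fun hx' => hmin x' t _ _ ht hC' (hxT x' hx')
  have hy₀A : y₀ ∉ A := fun hy₀A =>
    hC.not_mem_of_disjoint hroot hnested hh hy₀ hy₀x (hA.concat_s15 hc₁t)
      (fun hy₀x' => hx'T (hy₀x' ▸ Or.inl rfl))
      (fun a ha ha' => hdisj a ha (List.mem_append_left _ ha')) (List.mem_append_left _ hy₀A)
  obtain ⟨e, z, hez, heT, hzT⟩ := hA.exists_mem_arcsOf_not_mem_mem hx'T hA.mem_last hc₁T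
  have hzA : z ∈ A := List.mem_of_mem_tail (List.of_mem_zip hez).2
  have hwz : ReflTransGen E w z := hzT.resolve_left fun hzy₀ => hy₀A (hzy₀ ▸ hzA)
  obtain ⟨c, hcT, hcz⟩ := hparent z hwz
  have hce : c ≠ e := by
    rintro rfl
    exact heT hcT
  exact ⟨z, hwz, two_le_inDeg_iff.mpr ⟨c, e, hce, hcz, hA.rel_of_mem_arcsOf hez⟩,
    TransGen.tail' (hA.reflTransGen_to_last hzA) hc₁t⟩

theorem RetCycleAt.inDeg_le_one_of_reflTransGen [Fintype V] {r x h y₀ w u : V} {p q : List V}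
    (hacyc : ∀ v, ¬ TransGen E v v) (hroot : ∀ v, ReflTransGen E r v) (hnested : OneNested E)
    (hh : 2 ≤ inDeg E h) (hC : RetCycleAt E x h p q)
    (hmin : ∀ x' h' p' q', 2 ≤ inDeg E h' → RetCycleAt E x' h' p' q' → ¬ TransGen E x x')
    (hy₀ : y₀ ∈ p ∨ y₀ ∈ q) (hy₀x : y₀ ≠ x) (hy₀w : E y₀ w) (hwp : w ∉ p) (hwq : w ∉ q)
    (hwu : ReflTransGen E w u) : inDeg E u ≤ 1 := by
  by_contra hu
  obtain ⟨t, ⟨hwt, ht⟩, htop⟩ := (wellFounded_transGen hacyc).has_min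
    {z | ReflTransGen E w z ∧ 2 ≤ inDeg E z} ⟨u, hwu, by omega⟩
  obtain ⟨z, hwz, hz, hzt⟩ :=
    hC.exists_hybrid_transGen hacyc hroot hnested hh hmin hy₀ hy₀x hy₀w hwp hwq hwt ht
  exact htop z ⟨hwz, hz⟩ hzt

theorem outDeg_eq_zero_of_forall_inDeg_le_one [Fintype V] {w : V}
    (hhyb : ∀ v, (∃ w, E v w) → ∃ u, ReflTransGen E v u ∧ 2 ≤ inDeg E u)
    (hw : ∀ u, ReflTransGen E w u → inDeg E u ≤ 1) : outDeg E w = 0 := by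
  refine outDeg_eq_zero_iff.mpr fun w' hww' => ?_
  obtain ⟨u, hwu, hu⟩ := hhyb w ⟨w', hww'⟩
  exact absurd (hw u hwu) (by omega)

theorem exists_treeNode_children_treeLeaves [Fintype V] {v w : V}
    (hacyc : ∀ v, ¬ TransGen E v v) (hvw : E v w)
    (htree : ∀ u, ReflTransGen E v u → inDeg E u ≤ 1) :
    ∃ m, inDeg E m ≤ 1 ∧ (∃ w, E m w) ∧ ∀ w, E m w → outDeg E w = 0 ∧ inDeg E w ≤ 1 := by
  obtain ⟨m, ⟨hvm, hm⟩, hlow⟩ := (wellFounded_swap_transGen hacyc).has_min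
    {u | ReflTransGen E v u ∧ ∃ w, E u w} ⟨v, ReflTransGen.refl, w, hvw⟩
  refine ⟨m, htree m hvm, hm, fun w hmw => ⟨outDeg_eq_zero_iff.mpr fun w' hww' => ?_,
    htree w (hvm.tail hmw)⟩⟩
  exact hlow w ⟨hvm.tail hmw, w', hww'⟩ (TransGen.single hmw)

theorem exists_retCycleAt_minimal [Fintype V] {r : V} (hacyc : ∀ v, ¬ TransGen E v v)
    (hroot : ∀ v, ReflTransGen E r v) (hcard : 1 < Fintype.card V)
    (hhyb : ∀ v, (∃ w, E v w) → ∃ u, ReflTransGen E v u ∧ 2 ≤ inDeg E u) :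
    ∃ x h p q, 2 ≤ inDeg E h ∧ RetCycleAt E x h p q ∧
      ∀ x' h' p' q', 2 ≤ inDeg E h' → RetCycleAt E x' h' p' q' → ¬ TransGen E x x' := by
  obtain ⟨v, hv⟩ := Fintype.exists_ne_of_one_lt_card hcard r
  obtain ⟨c, hrc, -⟩ :=
    TransGen.head'_iff.mp ((reflTransGen_iff_eq_or_transGen.mp (hroot v)).resolve_left hv)
  obtain ⟨h₀, -, hh₀⟩ := hhyb r ⟨c, hrc⟩
  obtain ⟨a, b, hab, ha, hb⟩ := two_le_inDeg_iff.mp hh₀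
  obtain ⟨x₀, A, B, -, -, hC₀⟩ := exists_retCycleAt_s15 hab ha hb (hroot a) (hroot b)
  obtain ⟨x, ⟨h, p, q, hh, hC⟩, hmin⟩ := (wellFounded_swap_transGen hacyc).has_min
    {x | ∃ h p q, 2 ≤ inDeg E h ∧ RetCycleAt E x h p q} ⟨x₀, h₀, _, _, hh₀, hC₀⟩
  exact ⟨x, h, p, q, hh, hC, fun x' h' p' q' hh' hC' => hmin x' ⟨h', p', q', hh', hC'⟩⟩

end Networks

theorem stmt15_general {V : Type*} [Fintype V] (E : V → V → Prop) (r : V)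
    (hacyc : ∀ v, ¬ Relation.TransGen E v v)
    (hroot : ∀ v, Relation.ReflTransGen E r v)
    (hnested : OneNested E)
    (hcard : 1 < Fintype.card V) :
    (∃ v : V, inDeg E v ≤ 1 ∧ (∃ w, E v w) ∧
      ∀ w, E v w → outDeg E w = 0 ∧ inDeg E w ≤ 1) ∨
    (∃ (h x : V) (p q : List V),
      2 ≤ inDeg E h ∧ RetCycleAt E x h p q ∧
      (∀ w, E h w → outDeg E w = 0 ∧ inDeg E w ≤ 1) ∧
      ∀ y, (y ∈ internals p ∨ y ∈ internals q) →
        ∀ w, E y w → w ∉ p → w ∉ q → outDeg E w = 0 ∧ inDeg E w ≤ 1) := by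
  by_cases htree : ∃ v w, E v w ∧ ∀ u, ReflTransGen E v u → inDeg E u ≤ 1
  · obtain ⟨v, w, hvw, hv⟩ := htree
    exact Or.inl (exists_treeNode_children_treeLeaves hacyc hvw hv)
  have hhyb : ∀ v, (∃ w, E v w) → ∃ u, ReflTransGen E v u ∧ 2 ≤ inDeg E u := by
    rintro v ⟨w, hvw⟩
    by_contra! hv
    exact htree ⟨v, w, hvw, fun u hvu => Nat.le_of_lt_succ (hv u hvu)⟩
  obtain ⟨x, h, p, q, hh, hC, hmin⟩ := exists_retCycleAt_minimal hacyc hroot hcard hhyb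
  have hleaf : ∀ y, (y ∈ p ∨ y ∈ q) → y ≠ x → ∀ w, E y w → w ∉ p → w ∉ q →
      outDeg E w = 0 ∧ inDeg E w ≤ 1 := fun y hy hyx w hyw hwp hwq =>
    have hw : ∀ u, ReflTransGen E w u → inDeg E u ≤ 1 := fun _ =>
      hC.inDeg_le_one_of_reflTransGen hacyc hroot hnested hh hmin hy hyx hyw hwp hwq
    ⟨outDeg_eq_zero_of_forall_inDeg_le_one hhyb hw, hw w ReflTransGen.refl⟩
  refine Or.inr ⟨h, x, p, q, hh, hC, fun w hhw => ?_, fun y hy => ?_⟩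
  · refine hleaf h (Or.inl hC.walk_left.mem_last) (hC.ne hacyc).symm w hhw (fun hwp => ?_)
      (fun hwq => ?_)
    · exact hacyc h (TransGen.head' hhw (hC.walk_left.reflTransGen_to_last hwp))
    · exact hacyc h (TransGen.head' hhw (hC.walk_right.reflTransGen_to_last hwq))
  · have hxy : TransGen E x y :=
      hy.elim hC.walk_left.transGen_of_mem_internals hC.walk_right.transGen_of_mem_internals
    exact hleaf y (hy.imp mem_of_mem_internals mem_of_mem_internals)
      (fun hyx => hacyc x (hyx ▸ hxy))

/-- Every 1-nested hybridization network with more than one node contains either an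
internal tree node all of whose children are tree leaves, or a hybrid node all of
whose children are tree leaves and such that all intermediate nodes of its
reticulation cycle have all their children outside the cycle tree leaves. -/
theorem stmt15 {V : Type*} [Fintype V] (E : V → V → Prop) (r : V)
    (hacyc : ∀ v, ¬ Relation.TransGen E v v)
    (hroot : ∀ v, Relation.ReflTransGen E r v)
    (hin2 : ∀ v, inDeg E v ≤ 2)
    (hnod1 : ∀ v, inDeg E v ≤ 1 → outDeg E v ≠ 1)
    (hnested : OneNested E)
    (hcard : 1 < Fintype.card V) :
    (∃ v : V, inDeg E v ≤ 1 ∧ (∃ w, E v w) ∧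
      ∀ w, E v w → outDeg E w = 0 ∧ inDeg E w ≤ 1) ∨
    (∃ (h x : V) (p q : List V),
      2 ≤ inDeg E h ∧ RetCycleAt E x h p q ∧
      (∀ w, E h w → outDeg E w = 0 ∧ inDeg E w ≤ 1) ∧
      ∀ y, (y ∈ internals p ∨ y ∈ internals q) →
        ∀ w, E y w → w ∉ p → w ∉ q → outDeg E w = 0 ∧ inDeg E w ≤ 1) :=
  stmt15_general E r hacyc hroot hnested hcard
end
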